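/- Let M be a cofibrantly generated model category admitting a generating set I of cofibrations whose domains are all cofibrant. Then the homotopy category Ho(M) admits a left weakly adequate set of objects, namely the set of domains and codomains of I: an object X of Ho(M) is isomorphic to the terminal object if and only if Ho(M)(K, X) is a singleton for every K in this set. -/

import Mathlib

open CategoryTheory CategoryTheory.Limits

universe u
section Model

variable (M : Type u) [Category.{u} M]

/-- A class of morphisms is closed under retracts (in the arrow category). -/
def RetractClosed (P : MorphismProperty M) : Prop :=
  ∀ {X Y X' Y' : M} (f : X ⟶ Y) (g : X' ⟶ Y') (iX : X ⟶ X') (iY : Y ⟶ Y')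
    (rX : X' ⟶ X) (rY : Y' ⟶ Y),
    iX ≫ rX = 𝟙 X → iY ≫ rY = 𝟙 Y → iX ≫ g = f ≫ iY → rX ≫ f = g ≫ rY →
    P g → P f

/-- A model structure: weak equivalences, cofibrations and fibrations satisfying
the axioms M2–M5 of a model category (M1 is imposed via `HasLimits`/`HasColimits`
instance assumptions on the underlying category). -/
structure ModelStruct where
  W : MorphismProperty M
  Cof : MorphismProperty M
  Fib : MorphismProperty M
  W_id : ∀ X : M, W (𝟙 X)
  Cof_id : ∀ X : M, Cof (𝟙 X)
  Fib_id : ∀ X : M, Fib (𝟙 X)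
  W_comp : ∀ {X Y Z : M} (f : X ⟶ Y) (g : Y ⟶ Z), W f → W g → W (f ≫ g)
  Cof_comp : ∀ {X Y Z : M} (f : X ⟶ Y) (g : Y ⟶ Z), Cof f → Cof g → Cof (f ≫ g)
  Fib_comp : ∀ {X Y Z : M} (f : X ⟶ Y) (g : Y ⟶ Z), Fib f → Fib g → Fib (f ≫ g)
  two_of_three_left : ∀ {X Y Z : M} (f : X ⟶ Y) (g : Y ⟶ Z), W g → W (f ≫ g) → W f
  two_of_three_right : ∀ {X Y Z : M} (f : X ⟶ Y) (g : Y ⟶ Z), W f → W (f ≫ g) → W g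
  W_retract : RetractClosed M W
  Cof_retract : RetractClosed M Cof
  Fib_retract : RetractClosed M Fib
  lift_cof_trivFib : ∀ {A B X Y : M} (i : A ⟶ B) (p : X ⟶ Y),
    Cof i → Fib p → W p → HasLiftingProperty i p
  lift_trivCof_fib : ∀ {A B X Y : M} (i : A ⟶ B) (p : X ⟶ Y),
    Cof i → W i → Fib p → HasLiftingProperty i p
  fact_cof_trivFib : ∀ {X Y : M} (f : X ⟶ Y),
    ∃ (Z : M) (i : X ⟶ Z) (p : Z ⟶ Y), Cof i ∧ Fib p ∧ W p ∧ i ≫ p = f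
  fact_trivCof_fib : ∀ {X Y : M} (f : X ⟶ Y),
    ∃ (Z : M) (i : X ⟶ Z) (p : Z ⟶ Y), Cof i ∧ W i ∧ Fib p ∧ i ≫ p = f

variable {M}

/-- An object is cofibrant if the map from the initial object is a cofibration. -/
def ModelStruct.Cofibrant [HasInitial M] (m : ModelStruct M) (X : M) : Prop :=
  m.Cof (initial.to X)

/-- An object is fibrant if the map to the terminal object is a fibration. -/
def ModelStruct.Fibrant [HasTerminal M] (m : ModelStruct M) (X : M) : Prop :=
  m.Fib (terminal.from X)

end Model

/-!
For `K` cofibrant and `Y` fibrant, the fundamental lemma of homotopical algebra identifies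
`Ho(K, Y)` with right homotopy classes of maps `K ⟶ Y`. Replace `X` by a fibrant `Y` through
a trivial cofibration. Given a square from a generator `f k : A k ⟶ B k` to `Y ⟶ 1` with top
map `t`, pick any `v : B k ⟶ Y`; as `Ho(A k, Y)` is a singleton, `f k ≫ v` is right homotopic
to `t`, and homotopy extension along the cofibration `f k` deforms `v` into a strict lift.
Hence `Y ⟶ 1` lifts against the generators, so it is a trivial fibration and `X ⟶ 1` is a
weak equivalence.
-/

open HomotopicalAlgebra MorphismProperty

lemma RetractClosed.isStableUnderRetracts {M : Type u} [Category.{u} M] {P : MorphismProperty M}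
    (h : RetractClosed M P) : P.IsStableUnderRetracts :=
  ⟨fun r hg => h _ _ r.i.left r.i.right r.r.left r.r.right
    r.retract_left r.retract_right r.i_w r.r_w hg⟩

abbrev ModelStruct.toModelCategory {M : Type u} [Category.{u} M] [HasFiniteLimits M]
    [HasFiniteColimits M] (m : ModelStruct M) : ModelCategory M where
  categoryWithFibrations := ⟨m.Fib⟩
  categoryWithCofibrations := ⟨m.Cof⟩
  categoryWithWeakEquivalences := ⟨m.W⟩
  cm2 :=
    { comp_mem := m.W_comp
      of_postcomp := m.two_of_three_left
      of_precomp := m.two_of_three_right }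
  cm3a := RetractClosed.isStableUnderRetracts m.W_retract
  cm3b := RetractClosed.isStableUnderRetracts m.Fib_retract
  cm3c := RetractClosed.isStableUnderRetracts m.Cof_retract
  cm4a i p hi hw hp := m.lift_trivCof_fib i p hi.mem hw.mem hp.mem
  cm4b i p hi hp hw := m.lift_cof_trivFib i p hi.mem hp.mem hw.mem
  cm5a := ⟨fun f => by
    obtain ⟨Z, i, p, hi, hw, hp, fac⟩ := m.fact_trivCof_fib f
    exact ⟨⟨Z, i, p, fac, ⟨hi, hw⟩, hp⟩⟩⟩
  cm5b := ⟨fun f => by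
    obtain ⟨Z, i, p, hi, hp, hw, fac⟩ := m.fact_cof_trivFib f
    exact ⟨⟨Z, i, p, fac, hi, ⟨hp, hw⟩⟩⟩⟩

namespace HomotopicalAlgebra

variable {C : Type*} [Category* C] [ModelCategory C]

instance isFibrant_terminal : IsFibrant (⊤_ C) :=
  (isFibrant_iff_of_isTerminal (𝟙 _) terminalIsTerminal).2 inferInstance

lemma RightHomotopyRel.exists_extension {A B Y : C} (i : A ⟶ B) [Cofibration i]
    [IsFibrant Y] {v : B ⟶ Y} {t : A ⟶ Y} (h : RightHomotopyRel (i ≫ v) t) :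
    ∃ l : B ⟶ Y, i ≫ l = t := by
  obtain ⟨P, _, ⟨h⟩⟩ := h.exists_good_pathObject
  obtain ⟨l, h', hl⟩ := h.homotopy_extension i v
  exact ⟨l, by rw [← h'.h₁, reassoc_of% hl, h.h₁]⟩

variable {H : Type*} [Category* H] (L : C ⥤ H) [L.IsLocalization (weakEquivalences C)]

lemma subsingleton_map_obj_terminal (K : C) [IsCofibrant K] :
    Subsingleton (L.obj K ⟶ L.obj (⊤_ C)) := by
  refine ⟨fun φ ψ => ?_⟩
  obtain ⟨a, rfl⟩ := map_surjective_of_isLocalization L K (⊤_ C) φ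
  obtain ⟨b, rfl⟩ := map_surjective_of_isLocalization L K (⊤_ C) ψ
  rw [Subsingleton.elim a b]

lemma hasLiftingProperty_terminal_from_of_subsingleton_of_nonempty {A B Y : C} (i : A ⟶ B)
    [Cofibration i] [IsCofibrant A] [IsFibrant Y] [Subsingleton (L.obj A ⟶ L.obj Y)]
    [Nonempty (L.obj B ⟶ L.obj Y)] :
    HasLiftingProperty i (terminal.from Y) := by
  have := isCofibrant_of_cofibration i
  refine ⟨fun {t _} _ => ?_⟩
  obtain ⟨v, -⟩ := map_surjective_of_isLocalization L B Y (Classical.arbitrary _)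
  have hv : RightHomotopyRel (i ≫ v) t :=
    (RightHomotopyRel.iff_map_eq L _ _).2 (Subsingleton.elim _ _)
  obtain ⟨l, hl⟩ := hv.exists_extension
  exact ⟨⟨{ l := l, fac_left := hl, fac_right := Subsingleton.elim _ _ }⟩⟩

lemma nonempty_and_subsingleton_of_iso_terminal {X : C} (e : L.obj X ≅ L.obj (⊤_ C)) (K : C)
    [IsCofibrant K] : Nonempty (L.obj K ⟶ L.obj X) ∧ Subsingleton (L.obj K ⟶ L.obj X) :=
  have := subsingleton_map_obj_terminal L K
  ⟨⟨L.map (terminal.from K) ≫ e.inv⟩, ((Iso.refl _).homCongr e).subsingleton⟩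

lemma weakEquivalence_terminal_from_of_subsingleton_of_nonempty {ι : Type*} {A B : ι → C}
    (f : ∀ k, A k ⟶ B k) [∀ k, Cofibration (f k)] [∀ k, IsCofibrant (A k)]
    (hf : (ofHoms f).rlp ≤ weakEquivalences C) {X : C}
    (hA : ∀ k, Subsingleton (L.obj (A k) ⟶ L.obj X))
    (hB : ∀ k, Nonempty (L.obj (B k) ⟶ L.obj X)) :
    WeakEquivalence (terminal.from X) := by
  let j := FibrantObject.HoCat.iResolutionObj X
  let e := Localization.isoOfHom L (weakEquivalences C) j (mem_weakEquivalences j)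
  have hlift (k : ι) :
      HasLiftingProperty (f k) (terminal.from (FibrantObject.HoCat.resolutionObj X)) := by
    have := Equiv.subsingleton.symm ((Iso.refl (L.obj (A k))).homCongr e)
    have := ((Iso.refl (L.obj (B k))).homCongr e).nonempty_congr.1 (hB k)
    exact hasLiftingProperty_terminal_from_of_subsingleton_of_nonempty L (f k)
  have : WeakEquivalence (terminal.from (FibrantObject.HoCat.resolutionObj X)) := by
    rw [weakEquivalence_iff]
    exact hf _ fun _ _ _ ⟨k⟩ => hlift k
  rw [Subsingleton.elim (terminal.from X) (j ≫ terminal.from _)]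
  infer_instance

theorem nonempty_iso_terminal_iff {ι : Type*} {A B : ι → C} (f : ∀ k, A k ⟶ B k)
    [∀ k, Cofibration (f k)] [∀ k, IsCofibrant (A k)]
    (hf : (ofHoms f).rlp ≤ weakEquivalences C) (X : C) :
    Nonempty (L.obj X ≅ L.obj (⊤_ C)) ↔
      ∀ k, (Nonempty (L.obj (A k) ⟶ L.obj X) ∧ Subsingleton (L.obj (A k) ⟶ L.obj X)) ∧
        (Nonempty (L.obj (B k) ⟶ L.obj X) ∧ Subsingleton (L.obj (B k) ⟶ L.obj X)) := by
  refine ⟨fun ⟨e⟩ k => ?_, fun h => ?_⟩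
  · have := isCofibrant_of_cofibration (f k)
    exact ⟨nonempty_and_subsingleton_of_iso_terminal L e _,
      nonempty_and_subsingleton_of_iso_terminal L e _⟩
  · have := weakEquivalence_terminal_from_of_subsingleton_of_nonempty L f hf
      (fun k => (h k).1.2) (fun k => (h k).2.1)
    exact ⟨Localization.isoOfHom L _ (terminal.from X) (mem_weakEquivalences _)⟩

end HomotopicalAlgebra

/-- If `M` is cofibrantly generated by a set
`I = {Aᵢ → Xᵢ}` of cofibrations with cofibrant domains, then the set of domains
and codomains of `I` is left weakly adequate in `Ho(M)`: an object `X` is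
isomorphic to the terminal object in `Ho(M)` if and only if `Ho(M)(K, X)` is a
singleton for every such `K`. -/
theorem homotopyCategory_left_weakly_adequate {M : Type u} [Category.{u} M]
    [HasLimits M] [HasColimits M] (m : ModelStruct M)
    {ι : Type u} (A B : ι → M) (f : ∀ k, A k ⟶ B k)
    (hcof : ∀ k, m.Cof (f k)) (hAcof : ∀ k, m.Cofibrant (A k))
    (hgen : ∀ {X Y : M} (p : X ⟶ Y),
      (m.Fib p ∧ m.W p) ↔ ∀ k, HasLiftingProperty (f k) p) :
    ∀ X : M, Nonempty (m.W.Q.obj X ≅ m.W.Q.obj (⊤_ M)) ↔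
      ∀ k, (Nonempty (m.W.Q.obj (A k) ⟶ m.W.Q.obj X) ∧
              Subsingleton (m.W.Q.obj (A k) ⟶ m.W.Q.obj X)) ∧
           (Nonempty (m.W.Q.obj (B k) ⟶ m.W.Q.obj X) ∧
              Subsingleton (m.W.Q.obj (B k) ⟶ m.W.Q.obj X)) := by
  let := m.toModelCategory
  have : ∀ k, Cofibration (f k) := fun k => ⟨hcof k⟩
  have : ∀ k, IsCofibrant (A k) := fun k => ⟨hAcof k⟩
  have : m.W.Q.IsLocalization (weakEquivalences M) :=
    inferInstanceAs (m.W.Q.IsLocalization m.W)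
  exact nonempty_iso_terminal_iff m.W.Q f fun _ _ p hp => ((hgen p).2 fun k => hp _ ⟨k⟩).2
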